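/- arXiv:1806.06255 — 2 statements merged into one kernel-verified Lean document; each statement's English description precedes it below -/
import Mathlib

section
/- Let n = 4k with k ≥ 1, let σ be a generalized vector cross product on ℝⁿ, let X ∈ ℝⁿ be nonzero, and set E_X := (ker σ_X)^⊥. Then for every nonzero U ∈ ker(σ_X), σ_U restricts to an invertible endomorphism of E_X, and for all Y, Z ∈ ker(σ_X) one has σ_Y ∘ (σ_U|_{E_X})⁻¹ ∘ σ_Z = σ_Z ∘ (σ_U|_{E_X})⁻¹ ∘ σ_Y as endomorphisms of E_X. -/
open scoped RealInnerProductSpace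

noncomputable section

/-- Euclidean space `ℝⁿ`. -/
abbrev Euc (n : ℕ) : Type := EuclideanSpace ℝ (Fin n)

/-- The skew-symmetric endomorphism `τ_X` of `ℝⁿ` associated to a 3-form `τ` and a vector `X`,
characterized by `⟪τ_X Y, Z⟫ = τ (X, Y, Z)`. -/
noncomputable def contr3 {n : ℕ} (τ : AlternatingMap ℝ (Euc n) ℝ (Fin 3)) (X : Euc n) :
    Euc n →ₗ[ℝ] Euc n where
  toFun Y := ∑ i : Fin n,
    ((τ.curryLeft X).curryLeft Y ![EuclideanSpace.single i 1]) • EuclideanSpace.single i (1 : ℝ)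
  map_add' Y₁ Y₂ := by
    simp [map_add, add_smul, Finset.sum_add_distrib]
  map_smul' c Y := by
    simp [map_smul, smul_smul, Finset.smul_sum]

/-- `τ` is a vector cross product: `‖τ_X Y‖² = ‖X‖²‖Y‖² − ⟪X,Y⟫²`. -/
def IsVCP {n : ℕ} (τ : AlternatingMap ℝ (Euc n) ℝ (Fin 3)) : Prop :=
  ∀ X Y : Euc n, ‖contr3 τ X Y‖ ^ 2 = ‖X‖ ^ 2 * ‖Y‖ ^ 2 - ⟪X, Y⟫ ^ 2

/-- `σ` is a generalized vector cross product: there is a nonzero skew-symmetric endomorphism `A`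
such that for every unit vector `X`, `σ_X` is orthogonally conjugate to `A`. -/
def IsGVCP {n : ℕ} (σ : AlternatingMap ℝ (Euc n) ℝ (Fin 3)) : Prop :=
  ∃ A : Euc n →ₗ[ℝ] Euc n, A ≠ 0 ∧ (∀ X Y : Euc n, ⟪A X, Y⟫ = -⟪X, A Y⟫) ∧
    ∀ X : Euc n, ‖X‖ = 1 → ∃ u : Euc n ≃ₗᵢ[ℝ] Euc n,
      ∀ Y : Euc n, contr3 σ X Y = u (A (u.symm Y))

/-- The endomorphism `U ⊗ V : X ↦ ⟪X, V⟫ U`. -/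
noncomputable def tens {n : ℕ} (U V : Euc n) : Euc n →ₗ[ℝ] Euc n where
  toFun X := ⟪X, V⟫ • U
  map_add' X₁ X₂ := by (try simp only []); rw [inner_add_left, add_smul]
  map_smul' c X := by simp only [RingHom.id_apply]; rw [real_inner_smul_left, mul_smul]

/-- The `i`-th coordinate, as a linear functional on `ℝⁿ`. -/
noncomputable def coordL {n : ℕ} (i : Fin n) : Euc n →ₗ[ℝ] ℝ where
  toFun x := x i
  map_add' _ _ := rfl
  map_smul' _ _ := rfl

/-- The elementary 3-form `eᵢ ∧ eⱼ ∧ e_k` on `ℝⁿ`. -/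
noncomputable def elem3 {n : ℕ} (i j k : Fin n) : AlternatingMap ℝ (Euc n) ℝ (Fin 3) :=
  (Matrix.detRowAlternating : AlternatingMap ℝ (Fin 3 → ℝ) ℝ (Fin 3)).compLinearMap
    (LinearMap.pi (fun s : Fin 3 => coordL (![i, j, k] s)))

/-- The action of an orthogonal transformation `α` on 3-forms:
`(α · τ)(X,Y,Z) = τ(α⁻¹X, α⁻¹Y, α⁻¹Z)`. -/
noncomputable def oAct {n : ℕ} (α : Euc n ≃ₗᵢ[ℝ] Euc n)
    (τ : AlternatingMap ℝ (Euc n) ℝ (Fin 3)) : AlternatingMap ℝ (Euc n) ℝ (Fin 3) :=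
  τ.compLinearMap α.symm.toLinearEquiv.toLinearMap

/-- The volume form `e₁ ∧ e₂ ∧ e₃` (in any `ℝⁿ` with `n ≥ 3`). -/
noncomputable def vol3Gen {n : ℕ} (h : 3 ≤ n) : AlternatingMap ℝ (Euc n) ℝ (Fin 3) :=
  elem3 ⟨0, by omega⟩ ⟨1, by omega⟩ ⟨2, by omega⟩

/-- The fundamental `G₂` 3-form
`τ₀ = e₁∧e₂∧e₇ + e₃∧e₄∧e₇ + e₅∧e₆∧e₇ + e₁∧e₃∧e₅ − e₁∧e₄∧e₆ − e₂∧e₃∧e₆ − e₂∧e₄∧e₅`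
(with 1-indexed basis vectors, stated in any `ℝⁿ` with `n ≥ 7`). -/
noncomputable def tau0Gen {n : ℕ} (h : 7 ≤ n) : AlternatingMap ℝ (Euc n) ℝ (Fin 3) :=
  elem3 ⟨0, by omega⟩ ⟨1, by omega⟩ ⟨6, by omega⟩
  + elem3 ⟨2, by omega⟩ ⟨3, by omega⟩ ⟨6, by omega⟩
  + elem3 ⟨4, by omega⟩ ⟨5, by omega⟩ ⟨6, by omega⟩
  + elem3 ⟨0, by omega⟩ ⟨2, by omega⟩ ⟨4, by omega⟩
  - elem3 ⟨0, by omega⟩ ⟨3, by omega⟩ ⟨5, by omega⟩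
  - elem3 ⟨1, by omega⟩ ⟨2, by omega⟩ ⟨5, by omega⟩
  - elem3 ⟨1, by omega⟩ ⟨3, by omega⟩ ⟨4, by omega⟩

/-- The `SU(3)` 3-form `σ₀ = e₁∧e₃∧e₅ − e₁∧e₄∧e₆ − e₂∧e₃∧e₆ − e₂∧e₄∧e₅`
(with 1-indexed basis vectors, stated in any `ℝⁿ` with `n ≥ 6`). -/
noncomputable def sigma0Gen {n : ℕ} (h : 6 ≤ n) : AlternatingMap ℝ (Euc n) ℝ (Fin 3) :=
  elem3 ⟨0, by omega⟩ ⟨2, by omega⟩ ⟨4, by omega⟩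
  - elem3 ⟨0, by omega⟩ ⟨3, by omega⟩ ⟨5, by omega⟩
  - elem3 ⟨1, by omega⟩ ⟨2, by omega⟩ ⟨5, by omega⟩
  - elem3 ⟨1, by omega⟩ ⟨3, by omega⟩ ⟨4, by omega⟩

end

/-! Writing `σ_X = ‖X‖ • u A u⁻¹` for `X ≠ 0`, all kernels `ker σ_X` have the same dimension and
`σ_X` is bounded below by `μ ‖X‖` on `(ker σ_X)ᗮ`. By this uniform bound the ranges of
`σ_{W + t v}` (`v ⊥ W`) cannot drift away from `(ker σ_W)ᗮ` as `t → 0⁺`: a vector lying in all of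
them is orthogonal to `ker σ_W`. First-order preimages show that `σ` vanishes on
`ker σ_X × ker σ_X`; hence `ker σ_U = ker σ_X` and `σ_U` is invertible on `E_X`. Second-order
preimages show that `(e, f) ↦ ⟪σ_Y e, σ_U⁻¹ σ_Z f⟫` is antisymmetric on `E_X`, which, as all
maps involved are skew, is the commutation identity. -/

open Filter Topology

theorem nonpos_of_forall_pos_le_mul {c K : ℝ} (h : ∀ t > 0, c ≤ t * K) : c ≤ 0 := by
  have hlim : Tendsto (fun t : ℝ => t * K) (𝓝[>] 0) (𝓝 0) := by
    simpa using (tendsto_id.mul_const K).mono_left (nhdsWithin_le_nhds (a := (0 : ℝ)))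
  exact ge_of_tendsto hlim (eventually_nhdsWithin_of_forall h)

section InnerProductSpace
variable {E : Type*} [NormedAddCommGroup E] [InnerProductSpace ℝ E]

theorem LinearMap.exists_pos_mul_norm_le_of_mem_ker_orthogonal [FiniteDimensional ℝ E]
    {F : Type*} [NormedAddCommGroup F] [NormedSpace ℝ F] (T : E →ₗ[ℝ] F) :
    ∃ μ > 0, ∀ ξ ∈ (LinearMap.ker T)ᗮ, μ * ‖ξ‖ ≤ ‖T ξ‖ := by
  have hinj : LinearMap.ker (T.domRestrict (LinearMap.ker T)ᗮ) = ⊥ :=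
    LinearMap.ker_eq_bot.mpr <| LinearMap.injective_domRestrict_iff.mpr
      (Submodule.orthogonal_disjoint _).symm
  obtain ⟨K, hK, hanti⟩ := LinearMap.exists_antilipschitzWith _ hinj
  refine ⟨(K : ℝ)⁻¹, by positivity, fun ξ hξ => ?_⟩
  rw [inv_mul_le_iff₀ (by exact_mod_cast hK)]
  simpa using hanti.le_mul_dist ⟨ξ, hξ⟩ 0

theorem LinearMap.bijective_restrict_orthogonal [FiniteDimensional ℝ E] {T : E →ₗ[ℝ] E}
    {K : Submodule ℝ E} (hK : LinearMap.ker T ≤ K) (hT : ∀ v ∈ Kᗮ, T v ∈ Kᗮ) :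
    Function.Bijective (T.restrict hT) := by
  have hinj : Function.Injective (T.restrict hT) :=
    (LinearMap.injective_restrict_iff hT).mpr
      ((Submodule.orthogonal_disjoint K).symm.mono_right hK)
  exact ⟨hinj, LinearMap.injective_iff_surjective.mp hinj⟩

theorem mul_abs_inner_le_of_skew [FiniteDimensional ℝ E] {T : E →ₗ[ℝ] E}
    (hT : ∀ x y, ⟪T x, y⟫ = -⟪x, T y⟫) {c : ℝ}
    (hc : ∀ ξ ∈ (LinearMap.ker T)ᗮ, c * ‖ξ‖ ≤ ‖T ξ‖) {a : E} (ha : a ∈ LinearMap.range T)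
    (y : E) : c * |⟪a, y⟫| ≤ ‖a‖ * ‖T y‖ := by
  obtain ⟨θ, rfl⟩ := ha
  obtain ⟨κ, hκ, ξ, hξ, rfl⟩ := (LinearMap.ker T).exists_add_mem_mem_orthogonal θ
  rw [map_add, LinearMap.mem_ker.mp hκ, zero_add, hT, abs_neg]
  rcases le_or_gt c 0 with hc0 | hc0
  · exact (mul_nonpos_of_nonpos_of_nonneg hc0 (abs_nonneg _)).trans (by positivity)
  calc c * |⟪ξ, T y⟫| ≤ c * (‖ξ‖ * ‖T y‖) := by gcongr; exact abs_real_inner_le_norm _ _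
    _ ≤ ‖T ξ‖ * ‖T y‖ := by rw [← mul_assoc]; gcongr; exact hc ξ hξ

theorem LinearMap.comp_comp_comm_of_skew {S U Y Z : E →ₗ[ℝ] E}
    (hU : ∀ x y, ⟪U x, y⟫ = -⟪x, U y⟫) (hY : ∀ x y, ⟪Y x, y⟫ = -⟪x, Y y⟫)
    (hZ : ∀ x y, ⟪Z x, y⟫ = -⟪x, Z y⟫) (hS : U ∘ₗ S = LinearMap.id)
    (hanti : ∀ e f, ⟪Y e, S (Z f)⟫ + ⟪Y f, S (Z e)⟫ = 0) :
    Y ∘ₗ S ∘ₗ Z = Z ∘ₗ S ∘ₗ Y := by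
  have hUS : ∀ x, U (S x) = x := LinearMap.congr_fun hS
  refine LinearMap.ext fun e => ext_inner_right ℝ fun f => ?_
  simp only [LinearMap.comp_apply]
  calc ⟪Y (S (Z e)), f⟫ = -⟪Y f, S (Z e)⟫ := by rw [hY, real_inner_comm]
    _ = ⟪Y e, S (Z f)⟫ := by linarith [hanti e f]
    _ = ⟪U (S (Y e)), S (Z f)⟫ := by rw [hUS]
    _ = -⟪S (Y e), Z f⟫ := by rw [hU, hUS]
    _ = ⟪Z (S (Y e)), f⟫ := by rw [hZ]

end InnerProductSpace

namespace AlternatingMap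
variable {n : ℕ} (τ : AlternatingMap ℝ (Euc n) ℝ (Fin 3)) (a b c : Euc n)

theorem map_vec3_swap01 : τ ![a, b, c] = -τ ![b, a, c] := by
  rw [← τ.map_swap ![b, a, c] (show (0 : Fin 3) ≠ 1 by decide)]
  congr 1; funext i; fin_cases i <;> rfl

theorem map_vec3_swap12 : τ ![a, b, c] = -τ ![a, c, b] := by
  rw [← τ.map_swap ![a, c, b] (show (1 : Fin 3) ≠ 2 by decide)]
  congr 1; funext i; fin_cases i <;> rfl

end AlternatingMap

section Contraction
variable {n : ℕ} (τ : AlternatingMap ℝ (Euc n) ℝ (Fin 3))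

theorem inner_contr3 (a b c : Euc n) : ⟪contr3 τ a b, c⟫ = τ ![a, b, c] := by
  let ℓ : Euc n →ₗ[ℝ] ℝ := τ.toMultilinearMap.toLinearMap ![a, b, 0] 2
  have hℓ : ∀ y, ℓ y = τ ![a, b, y] := fun y => by
    show τ _ = τ _
    congr 1; funext i; fin_cases i <;> rfl
  have : contr3 τ a b = ∑ i, ℓ (EuclideanSpace.single i 1) • EuclideanSpace.single i 1 := by
    simp only [hℓ]; rfl
  rw [this, sum_inner, ← hℓ]
  conv_rhs => rw [← (EuclideanSpace.basisFun (Fin n) ℝ).sum_repr c]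
  simp [real_inner_smul_left, EuclideanSpace.inner_single_left, mul_comm]

theorem inner_contr3_cyclic (a b c : Euc n) : ⟪contr3 τ a b, c⟫ = ⟪contr3 τ c a, b⟫ := by
  rw [inner_contr3, inner_contr3, τ.map_vec3_swap12, τ.map_vec3_swap01, neg_neg]

theorem inner_contr3_eq_neg_inner (v x y : Euc n) :
    ⟪contr3 τ v x, y⟫ = -⟪x, contr3 τ v y⟫ := by
  rw [inner_contr3, real_inner_comm, inner_contr3, τ.map_vec3_swap12]

theorem contr3_anticomm (a b : Euc n) : contr3 τ a b = -contr3 τ b a :=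
  ext_inner_right ℝ fun c => by
    rw [inner_neg_left, inner_contr3, inner_contr3, τ.map_vec3_swap01]

theorem contr3_add_left (a a' b : Euc n) :
    contr3 τ (a + a') b = contr3 τ a b + contr3 τ a' b :=
  ext_inner_right ℝ fun c => by
    rw [inner_add_left, inner_contr3_cyclic, map_add, inner_add_left, ← inner_contr3_cyclic τ a,
      ← inner_contr3_cyclic τ a']

theorem contr3_smul_left (r : ℝ) (a b : Euc n) : contr3 τ (r • a) b = r • contr3 τ a b :=
  ext_inner_right ℝ fun c => by
    rw [real_inner_smul_left, inner_contr3_cyclic, map_smul, real_inner_smul_left,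
      ← inner_contr3_cyclic]

theorem inner_restrict_contr3_eq_neg_inner {K : Submodule ℝ (Euc n)} {W : Euc n}
    (hW : ∀ v ∈ K, contr3 τ W v ∈ K) (x y : K) :
    ⟪(contr3 τ W).restrict hW x, y⟫ = -⟪x, (contr3 τ W).restrict hW y⟫ :=
  inner_contr3_eq_neg_inner τ W x y

end Contraction

/-- A quantitative form of "`σ_W` has constant rank for `W ≠ 0`". -/
def IsUniformlyNondegenerate {n : ℕ} (σ : AlternatingMap ℝ (Euc n) ℝ (Fin 3)) : Prop :=
  ∃ μ > 0, ∀ W, ∀ ξ ∈ (LinearMap.ker (contr3 σ W))ᗮ, μ * ‖W‖ * ‖ξ‖ ≤ ‖contr3 σ W ξ‖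

namespace IsUniformlyNondegenerate
variable {n : ℕ} {σ : AlternatingMap ℝ (Euc n) ℝ (Fin 3)}

theorem inner_eq_zero_of_forall_mem_range (hσ : IsUniformlyNondegenerate σ) {W v a y : Euc n}
    (hW : W ≠ 0) (hv : ⟪W, v⟫ = 0) (hy : contr3 σ W y = 0)
    (ha : ∀ t > (0 : ℝ), a ∈ LinearMap.range (contr3 σ (W + t • v))) : ⟪a, y⟫ = 0 := by
  obtain ⟨μ, hμ, hlow⟩ := hσ
  have hbound : ∀ t > (0 : ℝ), μ * ‖W‖ * |⟪a, y⟫| ≤ t * (‖a‖ * ‖contr3 σ v y‖) := by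
    intro t ht
    have hWt : ‖W‖ ≤ ‖W + t • v‖ := by
      have h := norm_add_sq_eq_norm_sq_add_norm_sq_real
        (show ⟪W, t • v⟫ = 0 by rw [real_inner_smul_right, hv, mul_zero])
      exact (mul_self_le_mul_self_iff (norm_nonneg _) (norm_nonneg _)).mpr
        (by nlinarith [mul_self_nonneg ‖t • v‖])
    have hyt : contr3 σ (W + t • v) y = t • contr3 σ v y := by
      rw [contr3_add_left, contr3_smul_left, hy, zero_add]
    calc μ * ‖W‖ * |⟪a, y⟫| ≤ μ * ‖W + t • v‖ * |⟪a, y⟫| := by gcongr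
      _ ≤ ‖a‖ * ‖contr3 σ (W + t • v) y‖ :=
        mul_abs_inner_le_of_skew (inner_contr3_eq_neg_inner σ _) (hlow _) (ha t ht) y
      _ = t * (‖a‖ * ‖contr3 σ v y‖) := by
        rw [hyt, norm_smul, Real.norm_of_nonneg ht.le]; ring
  have hpos : 0 < μ * ‖W‖ := mul_pos hμ (norm_pos_iff.mpr hW)
  exact abs_nonpos_iff.mp <|
    nonpos_of_mul_nonpos_right (nonpos_of_forall_pos_le_mul hbound) hpos

theorem contr3_eq_zero_of_mem_ker (hσ : IsUniformlyNondegenerate σ) {x u w : Euc n}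
    (hx : x ≠ 0) (hu : contr3 σ x u = 0) (hw : contr3 σ x w = 0) : contr3 σ u w = 0 := by
  refine ext_inner_right ℝ fun z => ?_
  obtain ⟨p, hp, v, hv, rfl⟩ := (ℝ ∙ x).exists_add_mem_mem_orthogonal z
  obtain ⟨r, rfl⟩ := Submodule.mem_span_singleton.mp hp
  rw [inner_zero_left, inner_contr3_cyclic, contr3_add_left, contr3_smul_left, hu, smul_zero,
    zero_add]
  refine hσ.inner_eq_zero_of_forall_mem_range hx
    (Submodule.mem_orthogonal_singleton_iff_inner_right.mp hv) hw fun t ht => ⟨t⁻¹ • u, ?_⟩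
  rw [map_smul, contr3_add_left, contr3_smul_left, hu, zero_add, smul_smul,
    inv_mul_cancel₀ ht.ne', one_smul]

theorem contr3_mem_ker_orthogonal (hσ : IsUniformlyNondegenerate σ) {x W : Euc n}
    (hx : x ≠ 0) (hW : W ∈ LinearMap.ker (contr3 σ x)) :
    ∀ v ∈ (LinearMap.ker (contr3 σ x))ᗮ, contr3 σ W v ∈ (LinearMap.ker (contr3 σ x))ᗮ :=
  fun v _ w hw => by
    rw [real_inner_comm, inner_contr3_eq_neg_inner, hσ.contr3_eq_zero_of_mem_ker hx hW hw,
      inner_zero_right, neg_zero]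

theorem inner_contr3_eq_zero_of_contr3_eq (hσ : IsUniformlyNondegenerate σ) {U e g Y Z : Euc n}
    (hU : U ≠ 0) (he : ⟪U, e⟫ = 0) (hY : contr3 σ U Y = 0) (hZ : contr3 σ U Z = 0)
    (hg : contr3 σ U g = contr3 σ Z e) : ⟪contr3 σ Y e, g⟫ = 0 := by
  rw [← inner_contr3_cyclic]
  -- `σ_{U + t e} (t⁻¹ g + t⁻² Z) = σ_e g`: the terms of order `t⁻¹` cancel since `σ_U g = -σ_e Z`.
  refine hσ.inner_eq_zero_of_forall_mem_range hU he hY fun t ht => ⟨t⁻¹ • g + (t⁻¹) ^ 2 • Z, ?_⟩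
  simp only [contr3_add_left, contr3_smul_left, map_add, map_smul, hg, hZ, contr3_anticomm σ e Z]
  match_scalars <;> field_simp
  ring

theorem inner_contr3_add_inner_contr3_eq_zero (hσ : IsUniformlyNondegenerate σ)
    {U e f ge gf Y Z : Euc n} (hU : U ≠ 0) (he : ⟪U, e⟫ = 0) (hf : ⟪U, f⟫ = 0)
    (hY : contr3 σ U Y = 0) (hZ : contr3 σ U Z = 0) (hge : contr3 σ U ge = contr3 σ Z e)
    (hgf : contr3 σ U gf = contr3 σ Z f) :
    ⟪contr3 σ Y e, gf⟫ + ⟪contr3 σ Y f, ge⟫ = 0 := by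
  have hsum := hσ.inner_contr3_eq_zero_of_contr3_eq hU (e := e + f) (g := ge + gf)
    (by rw [inner_add_right, he, hf, add_zero]) hY hZ (by rw [map_add, map_add, hge, hgf])
  rw [map_add, inner_add_left, inner_add_right, inner_add_right,
    hσ.inner_contr3_eq_zero_of_contr3_eq hU he hY hZ hge,
    hσ.inner_contr3_eq_zero_of_contr3_eq hU hf hY hZ hgf] at hsum
  linarith

end IsUniformlyNondegenerate

namespace IsGVCP
variable {n : ℕ} {σ : AlternatingMap ℝ (Euc n) ℝ (Fin 3)}

theorem exists_contr3_eq_smul_conj (hσ : IsGVCP σ) :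
    ∃ A : Euc n →ₗ[ℝ] Euc n, ∀ x ≠ 0, ∃ u : Euc n ≃ₗᵢ[ℝ] Euc n,
      ∀ Y, contr3 σ x Y = ‖x‖ • u (A (u.symm Y)) := by
  obtain ⟨A, -, -, hconj⟩ := hσ
  refine ⟨A, fun x hx => ?_⟩
  obtain ⟨u, hu⟩ := hconj (‖x‖⁻¹ • x) (norm_smul_inv_norm hx)
  refine ⟨u, fun Y => ?_⟩
  rw [← hu, contr3_smul_left, smul_inv_smul₀ (norm_ne_zero_iff.mpr hx)]

theorem ker_contr3_eq_map {A : Euc n →ₗ[ℝ] Euc n} {x : Euc n} (hx : x ≠ 0)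
    {u : Euc n ≃ₗᵢ[ℝ] Euc n} (hu : ∀ Y, contr3 σ x Y = ‖x‖ • u (A (u.symm Y))) :
    LinearMap.ker (contr3 σ x) = (LinearMap.ker A).map (u.toLinearEquiv : Euc n →ₗ[ℝ] Euc n) := by
  ext ξ
  rw [Submodule.mem_map_equiv, LinearMap.mem_ker, LinearMap.mem_ker, hu,
    smul_eq_zero_iff_right (norm_ne_zero_iff.mpr hx), LinearIsometryEquiv.map_eq_zero_iff]
  rfl

theorem isUniformlyNondegenerate (hσ : IsGVCP σ) : IsUniformlyNondegenerate σ := by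
  obtain ⟨A, hA⟩ := hσ.exists_contr3_eq_smul_conj
  obtain ⟨μ, hμ, hlow⟩ := A.exists_pos_mul_norm_le_of_mem_ker_orthogonal
  refine ⟨μ, hμ, fun W ξ hξ => ?_⟩
  rcases eq_or_ne W 0 with rfl | hW
  · simp
  obtain ⟨u, hu⟩ := hA W hW
  rw [ker_contr3_eq_map hW hu, ← Submodule.map_orthogonal_equiv, Submodule.mem_map_equiv] at hξ
  calc μ * ‖W‖ * ‖ξ‖ = ‖W‖ * (μ * ‖u.symm ξ‖) := by rw [u.symm.norm_map]; ring
    _ ≤ ‖W‖ * ‖A (u.symm ξ)‖ := by gcongr; exact hlow _ hξ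
    _ = ‖contr3 σ W ξ‖ := by rw [hu, norm_smul, norm_norm, u.norm_map]

theorem finrank_ker_contr3_eq (hσ : IsGVCP σ) {x y : Euc n} (hx : x ≠ 0) (hy : y ≠ 0) :
    Module.finrank ℝ (LinearMap.ker (contr3 σ x)) =
      Module.finrank ℝ (LinearMap.ker (contr3 σ y)) := by
  obtain ⟨A, hA⟩ := hσ.exists_contr3_eq_smul_conj
  obtain ⟨u, hu⟩ := hA x hx
  obtain ⟨u', hu'⟩ := hA y hy
  rw [ker_contr3_eq_map hx hu, ker_contr3_eq_map hy hu', LinearEquiv.finrank_map_eq,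
    LinearEquiv.finrank_map_eq]

theorem ker_contr3_eq_of_mem_ker (hσ : IsGVCP σ) {x u : Euc n} (hx : x ≠ 0) (hu : u ≠ 0)
    (hux : u ∈ LinearMap.ker (contr3 σ x)) :
    LinearMap.ker (contr3 σ u) = LinearMap.ker (contr3 σ x) :=
  (Submodule.eq_of_le_of_finrank_eq
    (fun _ hw => hσ.isUniformlyNondegenerate.contr3_eq_zero_of_mem_ker hx hux hw)
    (hσ.finrank_ker_contr3_eq hx hu)).symm

end IsGVCP

theorem statement10_general {k : ℕ} (σ : AlternatingMap ℝ (Euc (4 * k)) ℝ (Fin 3))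
    (hσ : IsGVCP σ) (X : Euc (4 * k)) (hX : X ≠ 0)
    (U : Euc (4 * k)) (hU : U ≠ 0) (hUker : U ∈ LinearMap.ker (contr3 σ X)) :
    ∃ hEU : ∀ v ∈ (LinearMap.ker (contr3 σ X))ᗮ, contr3 σ U v ∈ (LinearMap.ker (contr3 σ X))ᗮ,
      Function.Bijective ((contr3 σ U).restrict hEU) ∧
      ∀ Y Z : Euc (4 * k), Y ∈ LinearMap.ker (contr3 σ X) → Z ∈ LinearMap.ker (contr3 σ X) →
        ∃ (hY : ∀ v ∈ (LinearMap.ker (contr3 σ X))ᗮ,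
            contr3 σ Y v ∈ (LinearMap.ker (contr3 σ X))ᗮ)
          (hZ : ∀ v ∈ (LinearMap.ker (contr3 σ X))ᗮ,
            contr3 σ Z v ∈ (LinearMap.ker (contr3 σ X))ᗮ),
          ∀ B : ((LinearMap.ker (contr3 σ X))ᗮ : Submodule ℝ (Euc (4 * k))) →ₗ[ℝ]
              ((LinearMap.ker (contr3 σ X))ᗮ : Submodule ℝ (Euc (4 * k))),
            (contr3 σ U).restrict hEU ∘ₗ B = LinearMap.id →
            B ∘ₗ (contr3 σ U).restrict hEU = LinearMap.id →
            (contr3 σ Y).restrict hY ∘ₗ B ∘ₗ (contr3 σ Z).restrict hZ =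
              (contr3 σ Z).restrict hZ ∘ₗ B ∘ₗ (contr3 σ Y).restrict hY := by
  have hnd := hσ.isUniformlyNondegenerate
  have hmaps := fun W (hW : W ∈ LinearMap.ker (contr3 σ X)) =>
    hnd.contr3_mem_ker_orthogonal hX hW
  have hUW := fun W (hW : W ∈ LinearMap.ker (contr3 σ X)) =>
    hnd.contr3_eq_zero_of_mem_ker hX hUker hW
  have hUe := fun (e : (LinearMap.ker (contr3 σ X))ᗮ) =>
    Submodule.inner_right_of_mem_orthogonal hUker e.2
  refine ⟨hmaps U hUker,
    LinearMap.bijective_restrict_orthogonal (hσ.ker_contr3_eq_of_mem_ker hX hU hUker).le _,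
    fun Y Z hY hZ => ⟨hmaps Y hY, hmaps Z hZ, fun B hB _ => ?_⟩⟩
  have hUB : ∀ e, contr3 σ U (B e) = e := fun e => congrArg Subtype.val (LinearMap.congr_fun hB e)
  refine LinearMap.comp_comp_comm_of_skew (inner_restrict_contr3_eq_neg_inner σ _)
    (inner_restrict_contr3_eq_neg_inner σ _) (inner_restrict_contr3_eq_neg_inner σ _) hB
    fun e f => ?_
  exact hnd.inner_contr3_add_inner_contr3_eq_zero hU (hUe e) (hUe f) (hUW Y hY) (hUW Z hZ)
    (hUB _) (hUB _)

/-- Let `n = 4k` with `k ≥ 1`, let `σ` be a generalized vector cross product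
on `ℝⁿ`, let `X ∈ ℝⁿ` be nonzero, and set `E_X := (ker σ_X)^⊥`. Then for every nonzero
`U ∈ ker(σ_X)`, `σ_U` restricts to an invertible endomorphism of `E_X`, and for all
`Y, Z ∈ ker(σ_X)` one has `σ_Y ∘ (σ_U|_{E_X})⁻¹ ∘ σ_Z = σ_Z ∘ (σ_U|_{E_X})⁻¹ ∘ σ_Y` as
endomorphisms of `E_X` (the inverse being taken in the sense of a two-sided inverse `B`). -/
theorem statement10 {k : ℕ} (hk : 1 ≤ k) (σ : AlternatingMap ℝ (Euc (4 * k)) ℝ (Fin 3))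
    (hσ : IsGVCP σ) (X : Euc (4 * k)) (hX : X ≠ 0)
    (U : Euc (4 * k)) (hU : U ≠ 0) (hUker : U ∈ LinearMap.ker (contr3 σ X)) :
    ∃ hEU : ∀ v ∈ (LinearMap.ker (contr3 σ X))ᗮ, contr3 σ U v ∈ (LinearMap.ker (contr3 σ X))ᗮ,
      Function.Bijective ((contr3 σ U).restrict hEU) ∧
      ∀ Y Z : Euc (4 * k), Y ∈ LinearMap.ker (contr3 σ X) → Z ∈ LinearMap.ker (contr3 σ X) →
        ∃ (hY : ∀ v ∈ (LinearMap.ker (contr3 σ X))ᗮ,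
            contr3 σ Y v ∈ (LinearMap.ker (contr3 σ X))ᗮ)
          (hZ : ∀ v ∈ (LinearMap.ker (contr3 σ X))ᗮ,
            contr3 σ Z v ∈ (LinearMap.ker (contr3 σ X))ᗮ),
          ∀ B : ((LinearMap.ker (contr3 σ X))ᗮ : Submodule ℝ (Euc (4 * k))) →ₗ[ℝ]
              ((LinearMap.ker (contr3 σ X))ᗮ : Submodule ℝ (Euc (4 * k))),
            (contr3 σ U).restrict hEU ∘ₗ B = LinearMap.id →
            B ∘ₗ (contr3 σ U).restrict hEU = LinearMap.id →
            (contr3 σ Y).restrict hY ∘ₗ B ∘ₗ (contr3 σ Z).restrict hZ =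
              (contr3 σ Z).restrict hZ ∘ₗ B ∘ₗ (contr3 σ Y).restrict hY :=
  statement10_general σ hσ X hX U hU hUker
end

section
/- Let n = 4k with k ≥ 1 and let σ be a 3-form on ℝⁿ such that dim ker(σ_X) = 2d for every nonzero X ∈ ℝⁿ. Then, regarding each σ_X as a 2-form via the inner product, one has (σ_X)^{∧(2k−d)} ∧ σ_W = 0 for all X, W ∈ ℝⁿ, where (σ_X)^{∧(2k−d)} denotes the (2k−d)-fold wedge power of σ_X. -/
open scoped RealInnerProductSpace

/-- The 2-vector in the exterior algebra `Λℝⁿ` corresponding (via the inner product) to a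
skew-symmetric endomorphism `A` of `ℝⁿ`: `½ ∑ᵢⱼ ⟪A eᵢ, eⱼ⟫ eᵢ ∧ eⱼ`. -/
noncomputable def skewToTwoVector {n : ℕ} (A : Euc n →ₗ[ℝ] Euc n) :
    ExteriorAlgebra ℝ (Euc n) :=
  (2⁻¹ : ℝ) • ∑ i : Fin n, ∑ j : Fin n,
    ⟪A (EuclideanSpace.single i 1), EuclideanSpace.single j 1⟫ •
      (ExteriorAlgebra.ι ℝ (EuclideanSpace.single i (1 : ℝ)) *
        ExteriorAlgebra.ι ℝ (EuclideanSpace.single j (1 : ℝ)))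

/-!
For a skew endomorphism `A` the 2-vector `ω(A) = ½ ∑ᵢ eᵢ ∧ A eᵢ` lies in `Λ²((ker A)ᗮ)`: the
component of `eᵢ` in `ker A` drops out because that projection is symmetric and killed by `A`.
Hence `ω(A)^(r+1) = 0` as soon as `rank A ≤ 2r`. Every `σ_Z` has rank `4k - 2d`, so
`ω(σ_Z)^(2k-d+1) = 0` for all `Z`. As `Z ↦ ω(σ_Z)` is linear and 2-vectors commute, the
coefficient of `t` in `(ω(σ_X) + t ω(σ_W))^(2k-d+1) = 0` gives `(2k-d+1) ω(σ_X)^(2k-d) ω(σ_W) = 0`.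
-/

open Finset Polynomial in
theorem eq_zero_of_forall_sum_pow_smul_eq_zero {K V : Type*} [Field K] [Infinite K]
    [AddCommGroup V] [Module K V] {N : ℕ} {c : ℕ → V}
    (h : ∀ t : K, ∑ j ∈ range N, t ^ j • c j = 0) {j : ℕ} (hj : j < N) : c j = 0 := by
  refine (Module.forall_dual_apply_eq_zero_iff K (c j)).1 fun φ => ?_
  set p : K[X] := ∑ i ∈ range N, C (φ (c i)) * X ^ i
  have hp : p = 0 := Polynomial.funext fun t => by
    have := congrArg φ (h t)
    simp only [map_sum, map_smul, smul_eq_mul, map_zero] at this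
    simp only [p, eval_finsetSum, eval_mul, eval_C, eval_pow, eval_X, eval_zero, ← this, mul_comm]
  simpa [p, finsetSum_coeff, coeff_C_mul_X_pow, hj] using congrArg (coeff · j) hp

theorem Commute.pow_mul_eq_zero_of_forall_add_smul_pow_eq_zero {K A : Type*} [Field K]
    [Infinite K] [CharZero K] [Ring A] [Algebra K A] {a b : A} (hab : Commute a b) {m : ℕ}
    (h : ∀ t : K, (a + t • b) ^ (m + 1) = 0) : a ^ m * b = 0 := by
  have hexp : ∀ t : K, ∑ j ∈ Finset.range (m + 2),
      t ^ j • (((m + 1).choose j : K) • (b ^ j * a ^ (m + 1 - j))) = 0 := fun t => by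
    rw [← h t, add_comm a, (hab.symm.smul_left t).add_pow]
    refine Finset.sum_congr rfl fun j _ => ?_
    rw [smul_pow, smul_mul_assoc, smul_mul_assoc, Nat.cast_smul_eq_nsmul, nsmul_eq_mul,
      Nat.cast_comm]
  have h1 := eq_zero_of_forall_sum_pow_smul_eq_zero hexp (j := 1) (by omega)
  rw [Nat.choose_one_right, pow_one, Nat.add_sub_cancel, smul_eq_zero] at h1
  rw [(hab.pow_left m).eq]
  exact h1.resolve_left (Nat.cast_ne_zero.2 m.succ_ne_zero)

namespace ExteriorAlgebra

variable {R M : Type*} [CommRing R] [AddCommGroup M] [Module R M]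

theorem ι_mul_ι_commute_ι (a b c : M) : Commute (ι R a * ι R b) (ι R c) := by
  have swap : ∀ x y : M, ι R x * ι R y = -(ι R y * ι R x) := fun x y =>
    eq_neg_of_add_eq_zero_left (ι_add_mul_swap x y)
  show ι R a * ι R b * ι R c = ι R c * (ι R a * ι R b)
  rw [mul_assoc, swap b, mul_neg, ← mul_assoc, swap a, neg_mul, neg_neg, mul_assoc]

theorem ι_mul_ι_commute_ι_mul_ι (a b c d : M) : Commute (ι R a * ι R b) (ι R c * ι R d) :=
  (ι_mul_ι_commute_ι a b c).mul_right (ι_mul_ι_commute_ι a b d)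

variable {K V : Type*} [Field K] [AddCommGroup V] [Module K V] [FiniteDimensional K V]

theorem exteriorPower_eq_bot_of_finrank_lt {n : ℕ} (h : Module.finrank K V < n) :
    ⋀[K]^n V = ⊥ :=
  Submodule.finrank_eq_zero.1 <| by rw [exteriorPower.finrank_eq, Nat.choose_eq_zero_of_lt h]

theorem pow_eq_zero_of_mem_exteriorPower_two {x : ExteriorAlgebra K V} (hx : x ∈ ⋀[K]^2 V)
    {m : ℕ} (hm : Module.finrank K V < 2 * m) : x ^ m = 0 := by
  have hxm : x ^ m ∈ ⋀[K]^(2 * m) V := by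
    rw [exteriorPower, pow_mul]
    exact Submodule.pow_mem_pow _ hx m
  rwa [exteriorPower_eq_bot_of_finrank_lt hm, Submodule.mem_bot] at hxm

theorem sum_ι_mul_ι_pow_eq_zero {I : Type*} (W : Submodule K V) (s : Finset I) {a b : I → V}
    (ha : ∀ i, a i ∈ W) (hb : ∀ i, b i ∈ W) {m : ℕ} (hm : Module.finrank K W < 2 * m) :
    (∑ i ∈ s, ι K (a i) * ι K (b i)) ^ m = 0 := by
  set x : ExteriorAlgebra K W := ∑ i ∈ s, ι K ⟨a i, ha i⟩ * ι K ⟨b i, hb i⟩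
  have hx : x ∈ ⋀[K]^2 W := Submodule.sum_mem _ fun i _ => by
    rw [exteriorPower, pow_two]
    exact Submodule.mul_mem_mul (LinearMap.mem_range_self _ _) (LinearMap.mem_range_self _ _)
  have hmap : map W.subtype x = ∑ i ∈ s, ι K (a i) * ι K (b i) := by simp [x]
  rw [← hmap, ← map_pow, pow_eq_zero_of_mem_exteriorPower_two hx hm, map_zero]

end ExteriorAlgebra

open ExteriorAlgebra

theorem OrthonormalBasis.sum_apply_apply_of_isSymmetric {ι E F M : Type*} [Fintype ι]
    [NormedAddCommGroup E] [InnerProductSpace ℝ E] [AddCommGroup F] [Module ℝ F]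
    [AddCommGroup M] [Module ℝ M] (b : OrthonormalBasis ι ℝ E) {Q : E →ₗ[ℝ] E}
    (hQ : Q.IsSymmetric) (B : E →ₗ[ℝ] F →ₗ[ℝ] M) (f : E →ₗ[ℝ] F) :
    ∑ i, B (Q (b i)) (f (b i)) = ∑ i, B (b i) (f (Q (b i))) := by
  conv_lhs => enter [2, i]; rw [← b.sum_repr' (Q (b i))]
  simp only [map_sum, map_smul, LinearMap.sum_apply, LinearMap.smul_apply]
  rw [Finset.sum_comm]
  refine Finset.sum_congr rfl fun j _ => ?_
  conv_rhs => rw [← b.sum_repr' (Q (b j))]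
  simp only [map_sum, map_smul]
  refine Finset.sum_congr rfl fun i _ => ?_
  rw [← hQ, real_inner_comm]

theorem apply_mem_orthogonal_ker_of_skew {E : Type*} [NormedAddCommGroup E]
    [InnerProductSpace ℝ E] {A : E →ₗ[ℝ] E} (hA : ∀ x y, ⟪A x, y⟫ = -⟪x, A y⟫)
    (x : E) : A x ∈ (LinearMap.ker A)ᗮ := by
  intro u hu
  rw [real_inner_comm, hA, LinearMap.mem_ker.1 hu, inner_zero_right, neg_zero]

section

variable {n : ℕ}

theorem skewToTwoVector_eq_sum (A : Euc n →ₗ[ℝ] Euc n) :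
    skewToTwoVector A = (2⁻¹ : ℝ) • ∑ i, ι ℝ (EuclideanSpace.basisFun (Fin n) ℝ i) *
      ι ℝ (A (EuclideanSpace.basisFun (Fin n) ℝ i)) := by
  set b := EuclideanSpace.basisFun (Fin n) ℝ
  rw [skewToTwoVector]
  congr 1
  refine Finset.sum_congr rfl fun i _ => ?_
  conv_rhs => rw [← b.sum_repr' (A (b i))]
  simp only [map_sum, map_smul, Finset.mul_sum, mul_smul_comm, b,
    EuclideanSpace.basisFun_apply, real_inner_comm]

theorem skewToTwoVector_eq_sum_starProjection (A : Euc n →ₗ[ℝ] Euc n) :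
    skewToTwoVector A = (2⁻¹ : ℝ) • ∑ i, ι ℝ ((LinearMap.ker A)ᗮ.starProjection
      (EuclideanSpace.basisFun (Fin n) ℝ i)) * ι ℝ (A (EuclideanSpace.basisFun (Fin n) ℝ i)) := by
  rw [skewToTwoVector_eq_sum]
  set b := EuclideanSpace.basisFun (Fin n) ℝ
  set K := LinearMap.ker A
  have hK : ∑ i, ι ℝ (K.starProjection (b i)) * ι ℝ (A (b i)) = 0 := by
    have := b.sum_apply_apply_of_isSymmetric K.starProjection_isSymmetric
      ((LinearMap.mul ℝ (ExteriorAlgebra ℝ (Euc n))).compl₁₂ (ι ℝ) (ι ℝ)) A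
    simp only [LinearMap.compl₁₂_apply, LinearMap.mul_apply', ContinuousLinearMap.coe_coe] at this
    rw [this]
    exact Finset.sum_eq_zero fun i _ => by
      rw [LinearMap.mem_ker.1 (K.starProjection_apply_mem _), map_zero, mul_zero]
  have hsplit : ∀ i, ι ℝ (b i) * ι ℝ (A (b i)) = ι ℝ (K.starProjection (b i)) * ι ℝ (A (b i)) +
      ι ℝ (Kᗮ.starProjection (b i)) * ι ℝ (A (b i)) := fun i => by
    rw [← add_mul, ← map_add, K.starProjection_add_starProjection_orthogonal]
  simp_rw [hsplit, Finset.sum_add_distrib, hK, zero_add]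

theorem skewToTwoVector_pow_eq_zero {A : Euc n →ₗ[ℝ] Euc n} (hA : ∀ x y, ⟪A x, y⟫ = -⟪x, A y⟫)
    {m : ℕ} (hm : Module.finrank ℝ (LinearMap.ker A)ᗮ < 2 * m) : skewToTwoVector A ^ m = 0 := by
  rw [skewToTwoVector_eq_sum_starProjection, smul_pow,
    sum_ι_mul_ι_pow_eq_zero _ _ (fun i => Submodule.starProjection_apply_mem _ _)
      (fun i => apply_mem_orthogonal_ker_of_skew hA _) hm, smul_zero]

theorem skewToTwoVector_add (A B : Euc n →ₗ[ℝ] Euc n) :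
    skewToTwoVector (A + B) = skewToTwoVector A + skewToTwoVector B := by
  simp only [skewToTwoVector_eq_sum, LinearMap.add_apply, map_add, mul_add,
    Finset.sum_add_distrib, smul_add]

theorem skewToTwoVector_smul (c : ℝ) (A : Euc n →ₗ[ℝ] Euc n) :
    skewToTwoVector (c • A) = c • skewToTwoVector A := by
  simp only [skewToTwoVector_eq_sum, LinearMap.smul_apply, map_smul, mul_smul_comm,
    ← Finset.smul_sum, smul_comm c]

theorem skewToTwoVector_commute (A B : Euc n →ₗ[ℝ] Euc n) :
    Commute (skewToTwoVector A) (skewToTwoVector B) := by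
  rw [skewToTwoVector_eq_sum, skewToTwoVector_eq_sum]
  exact ((Commute.sum_left _ _ _ fun i _ => Commute.sum_right _ _ _ fun j _ =>
    ι_mul_ι_commute_ι_mul_ι _ _ _ _).smul_left _).smul_right _

theorem inner_contr3_s14 (τ : AlternatingMap ℝ (Euc n) ℝ (Fin 3)) (X Y Z : Euc n) :
    ⟪contr3 τ X Y, Z⟫ = τ ![X, Y, Z] := by
  have hupd : ∀ V, Function.update ![X, Y, Z] 2 V = ![X, Y, V] := fun V => by
    ext i : 1; fin_cases i <;> rfl
  calc ⟪contr3 τ X Y, Z⟫ = ∑ i, Z i * τ ![X, Y, EuclideanSpace.single i 1] := by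
        simp [contr3, sum_inner, real_inner_smul_left, EuclideanSpace.inner_single_left, mul_comm]
    _ = τ (Function.update ![X, Y, Z] 2 (∑ i, Z i • EuclideanSpace.single i 1)) := by
        rw [τ.map_update_sum]
        simp_rw [τ.map_update_smul, hupd, smul_eq_mul]
    _ = τ ![X, Y, Z] := by
        have := (EuclideanSpace.basisFun (Fin n) ℝ).sum_repr Z
        simp only [EuclideanSpace.basisFun_apply, EuclideanSpace.basisFun_repr] at this
        rw [this, hupd]

theorem contr3_skew (τ : AlternatingMap ℝ (Euc n) ℝ (Fin 3)) (X Y Z : Euc n) :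
    ⟪contr3 τ X Y, Z⟫ = -⟪Y, contr3 τ X Z⟫ := by
  have hswap : ![X, Z, Y] ∘ Equiv.swap 1 2 = ![X, Y, Z] := by
    ext i : 1; fin_cases i <;> rfl
  rw [inner_contr3_s14, real_inner_comm, inner_contr3_s14, ← τ.map_swap _ (by decide : (1 : Fin 3) ≠ 2),
    hswap]

theorem contr3_add (τ : AlternatingMap ℝ (Euc n) ℝ (Fin 3)) (X X' : Euc n) :
    contr3 τ (X + X') = contr3 τ X + contr3 τ X' := by
  ext Y : 1
  simp [contr3, add_smul, Finset.sum_add_distrib]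

theorem contr3_smul (τ : AlternatingMap ℝ (Euc n) ℝ (Fin 3)) (c : ℝ) (X : Euc n) :
    contr3 τ (c • X) = c • contr3 τ X := by
  ext Y : 1
  simp [contr3, smul_smul, Finset.smul_sum]

theorem contr3_zero (τ : AlternatingMap ℝ (Euc n) ℝ (Fin 3)) : contr3 τ 0 = 0 := by
  simpa using contr3_smul τ 0 0

end

theorem statement14_general {k d : ℕ} (σ : AlternatingMap ℝ (Euc (4 * k)) ℝ (Fin 3))
    (hd : ∀ X : Euc (4 * k), X ≠ 0 →
      Module.finrank ℝ (LinearMap.ker (contr3 σ X)) = 2 * d) :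
    ∀ X W : Euc (4 * k),
      skewToTwoVector (contr3 σ X) ^ (2 * k - d) * skewToTwoVector (contr3 σ W) = 0 := by
  intro X W
  have hnil : ∀ Z, skewToTwoVector (contr3 σ Z) ^ (2 * k - d + 1) = 0 := fun Z => by
    refine skewToTwoVector_pow_eq_zero (contr3_skew σ Z) ?_
    rcases eq_or_ne Z 0 with rfl | hZ
    · rw [contr3_zero, LinearMap.ker_zero, Submodule.top_orthogonal_eq_bot, finrank_bot]
      omega
    · have := (LinearMap.ker (contr3 σ Z)).finrank_add_finrank_orthogonal
      rw [hd Z hZ, finrank_euclideanSpace_fin] at this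
      omega
  refine (skewToTwoVector_commute _ _).pow_mul_eq_zero_of_forall_add_smul_pow_eq_zero
    fun t : ℝ => ?_
  rw [← skewToTwoVector_smul, ← skewToTwoVector_add, ← contr3_smul, ← contr3_add]
  exact hnil _

/-- Let `n = 4k` with `k ≥ 1` and let `σ` be a 3-form on `ℝⁿ` such that
`dim ker(σ_X) = 2d` for every nonzero `X ∈ ℝⁿ`. Then, regarding each `σ_X` as a 2-form via the
inner product, one has `(σ_X)^{∧(2k−d)} ∧ σ_W = 0` for all `X, W ∈ ℝⁿ`. -/
theorem statement14 {k d : ℕ} (hk : 1 ≤ k) (σ : AlternatingMap ℝ (Euc (4 * k)) ℝ (Fin 3))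
    (hd : ∀ X : Euc (4 * k), X ≠ 0 →
      Module.finrank ℝ (LinearMap.ker (contr3 σ X)) = 2 * d) :
    ∀ X W : Euc (4 * k),
      skewToTwoVector (contr3 σ X) ^ (2 * k - d) * skewToTwoVector (contr3 σ W) = 0 :=
  statement14_general σ hd
end
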